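/- Let m ≤ n+1, f ∈ H_d[m], Z := {z ∈ ℝ^{n+1} : f(z) = 0}, M_S := Z ∩ S^n, p ∈ S^n, and T := p^⊥. Then for all ε ∈ (0,1), φ(Z ∩ B_{ε,T}(p)) = M_S ∩ φ(B_{h(ε)}(p)), where h(ε) := ε/√(1+ε²), φ(z) := z/‖z‖ for z ≠ 0, B_{ε,T}(p) := p + {v ∈ T : ‖v‖ < ε}, and B_{h(ε)}(p) is the open Euclidean ball of radius h(ε) centered at p in ℝ^{n+1} (φ applied to a set means its image, with 0 excluded). -/

import Mathlib

open Function Metric Filter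
open scoped ENNReal

noncomputable section

/-- Evaluation of a polynomial system as a map between Euclidean spaces. -/
def evalSys {n m : ℕ} (f : Fin m → MvPolynomial (Fin (n + 1)) ℝ) :
    EuclideanSpace ℝ (Fin (n + 1)) → EuclideanSpace ℝ (Fin m) :=
  fun x => WithLp.toLp 2 (fun i => MvPolynomial.eval (fun j => x j) (f i))

/-- Moore–Penrose inverse A† = Aᵀ (A Aᵀ)⁻¹ of a (surjective) continuous linear map
between real inner product spaces. -/
def pinv {E F : Type*} [NormedAddCommGroup E] [InnerProductSpace ℝ E] [CompleteSpace E]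
    [NormedAddCommGroup F] [InnerProductSpace ℝ F] [CompleteSpace F]
    (A : E →L[ℝ] F) : F →L[ℝ] E :=
  (ContinuousLinearMap.adjoint A).comp (Ring.inverse (A.comp (ContinuousLinearMap.adjoint A)))

/-- The diagonal matrix Δ(x) with diagonal entries ‖x‖^(dᵢ−1)·√dᵢ, as a linear map ℝ^m → ℝ^m. -/
def Delta {n m : ℕ} (d : Fin m → ℕ) (x : EuclideanSpace ℝ (Fin (n + 1))) :
    EuclideanSpace ℝ (Fin m) →L[ℝ] EuclideanSpace ℝ (Fin m) :=
  LinearMap.toContinuousLinearMap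
    (Matrix.toEuclideanLin (Matrix.diagonal fun i => ‖x‖ ^ (d i - 1) * Real.sqrt (d i)))

/-- Weyl norm squared of a polynomial system: Σᵢ Σ_a coeff²·(dᵢ choose a)⁻¹. -/
def weylNormSq {n m : ℕ} (f : Fin m → MvPolynomial (Fin (n + 1)) ℝ) : ℝ :=
  ∑ i, ∑ a ∈ (f i).support, ((f i).coeff a) ^ 2 / (Nat.multinomial a.support a : ℝ)

/-- Weyl norm of a polynomial system. -/
def weylNorm {n m : ℕ} (f : Fin m → MvPolynomial (Fin (n + 1)) ℝ) : ℝ :=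
  Real.sqrt (weylNormSq f)

/-- μ_norm(f,x) = ‖f‖·‖Df(x)†·Δ(x)‖ (real-valued formula, meaningful when Df(x) is surjective). -/
def munormR {n m : ℕ} (d : Fin m → ℕ) (f : Fin m → MvPolynomial (Fin (n + 1)) ℝ)
    (x : EuclideanSpace ℝ (Fin (n + 1))) : ℝ :=
  weylNorm f * ‖(pinv (fderiv ℝ (evalSys f) x)).comp (Delta d x)‖

open Classical in
/-- μ_norm(f,x), with value ∞ when Df(x) is not surjective. -/
def munormE {n m : ℕ} (d : Fin m → ℕ) (f : Fin m → MvPolynomial (Fin (n + 1)) ℝ)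
    (x : EuclideanSpace ℝ (Fin (n + 1))) : ℝ≥0∞ :=
  if Surjective ⇑(fderiv ℝ (evalSys f) x) then ENNReal.ofReal (munormR d f x) else ⊤

/-- The maximal degree D. -/
def Dmax {m : ℕ} (d : Fin m → ℕ) : ℕ := Finset.univ.sup d

/-- Radial projection onto the unit sphere, φ(z) = z/‖z‖. -/
def sphProj {k : ℕ} (y : EuclideanSpace ℝ (Fin k)) : EuclideanSpace ℝ (Fin k) :=
  ‖y‖⁻¹ • y

/-!
A homogeneous system has a cone `Z` as zero set, so `φ(Z ∩ A) = Z ∩ φ(A)` for every set `A`, and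
the claim reduces to `φ(B_{ε,T}(p)) = φ(B_{h(ε)}(p))`. Both images are the spherical cap
`{x ∈ Sⁿ : ⟪x, p⟫ > 0, (1 + ε²)⟪x, p⟫² > 1}`: the ray through a unit vector `x` with `c = ⟪x, p⟫`
meets the tangent plane `p + T` at `x / c`, at distance `√(c⁻² - 1)` from `p`, and it comes closest
to `p` at `c • x`, at distance `√(1 - c²)`.
-/

open scoped RealInnerProductSpace

theorem MvPolynomial.IsHomogeneous.eval_smul {R σ : Type*} [CommSemiring R]
    {φ : MvPolynomial σ R} {k : ℕ} (hφ : φ.IsHomogeneous k) (c : R) (x : σ → R) :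
    eval (c • x) φ = c ^ k * eval x φ := by
  rw [eval_eq, eval_eq, Finset.mul_sum]
  refine Finset.sum_congr rfl fun a ha => ?_
  simp_rw [Pi.smul_apply, smul_eq_mul, mul_pow, Finset.prod_mul_distrib,
    Finset.prod_pow_eq_pow_sum, ← hφ.degree_eq_sum_deg_support ha]
  ring

theorem evalSys_smul_eq_zero {n m : ℕ} {d : Fin m → ℕ} {f : Fin m → MvPolynomial (Fin (n + 1)) ℝ}
    (hf : ∀ i, (f i).IsHomogeneous (d i)) (c : ℝ) {x : EuclideanSpace ℝ (Fin (n + 1))}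
    (hx : evalSys f x = 0) : evalSys f (c • x) = 0 := by
  ext i
  have hxi : MvPolynomial.eval (fun j => x j) (f i) = 0 := congrArg (· i) hx
  change MvPolynomial.eval (c • fun j => x j) (f i) = 0
  rw [(hf i).eval_smul, hxi, mul_zero]

theorem zero_notMem_ball_of_le_norm {E : Type*} [SeminormedAddCommGroup E] {p : E} {r : ℝ}
    (hr : r ≤ ‖p‖) : (0 : E) ∉ ball p r := by
  simpa [dist_eq_norm] using hr

section TangentDisc

variable {E : Type*} [NormedAddCommGroup E] [InnerProductSpace ℝ E]

/-- `B_{ε,T}(p)` with `T = p^⊥`. -/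
def tangentDisc (p : E) (ε : ℝ) : Set E :=
  {z | ∃ v ∈ (ℝ ∙ p)ᗮ, ‖v‖ < ε ∧ z = p + v}

variable {p x : E} {ε r : ℝ}

theorem mem_tangentDisc_iff {z : E} : z ∈ tangentDisc p ε ↔ ⟪p, z - p⟫ = 0 ∧ ‖z - p‖ < ε := by
  constructor
  · rintro ⟨v, hv, hvε, rfl⟩
    rw [add_sub_cancel_left]
    exact ⟨Submodule.mem_orthogonal_singleton_iff_inner_right.mp hv, hvε⟩
  · rintro ⟨hp, hε⟩
    exact ⟨z - p, Submodule.mem_orthogonal_singleton_iff_inner_right.mpr hp, hε, by abel⟩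

theorem zero_notMem_tangentDisc (hp : ‖p‖ = 1) : (0 : E) ∉ tangentDisc p ε := by
  simp [mem_tangentDisc_iff, hp]

theorem norm_smul_sub_sq (hp : ‖p‖ = 1) (hx : ‖x‖ = 1) (t : ℝ) :
    ‖t • x - p‖ ^ 2 = t ^ 2 - 2 * t * ⟪x, p⟫ + 1 := by
  rw [norm_sub_sq_real, norm_smul, real_inner_smul_left, hp, hx, mul_one, Real.norm_eq_abs,
    sq_abs]
  ring

theorem exists_pos_smul_mem_tangentDisc_iff (hp : ‖p‖ = 1) (hx : ‖x‖ = 1) (hε : 0 ≤ ε) :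
    (∃ t : ℝ, 0 < t ∧ t • x ∈ tangentDisc p ε) ↔ 0 < ⟪x, p⟫ ∧ 1 < (1 + ε ^ 2) * ⟪x, p⟫ ^ 2 := by
  have hinner (t : ℝ) : ⟪p, t • x - p⟫ = t * ⟪x, p⟫ - 1 := by
    rw [inner_sub_right, real_inner_smul_right, real_inner_comm, real_inner_self_eq_norm_sq, hp,
      one_pow]
  simp only [mem_tangentDisc_iff, hinner, sub_eq_zero, ← pow_lt_pow_iff_left₀ (norm_nonneg _) hε
    two_ne_zero, norm_smul_sub_sq hp hx]
  constructor
  · rintro ⟨t, ht, htc, hdist⟩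
    have hc : 0 < ⟪x, p⟫ := pos_of_mul_pos_right (htc.symm ▸ one_pos) ht.le
    have ht2 : t ^ 2 < 1 + ε ^ 2 := by rw [mul_assoc, htc] at hdist; linarith
    refine ⟨hc, ?_⟩
    calc 1 = t ^ 2 * ⟪x, p⟫ ^ 2 := by rw [← mul_pow, htc, one_pow]
      _ < (1 + ε ^ 2) * ⟪x, p⟫ ^ 2 := by gcongr
  · rintro ⟨hc, hcap⟩
    refine ⟨⟪x, p⟫⁻¹, inv_pos.mpr hc, inv_mul_cancel₀ hc.ne', ?_⟩
    have hinv : (⟪x, p⟫ ^ 2)⁻¹ < 1 + ε ^ 2 := (inv_lt_iff_one_lt_mul₀ (by positivity)).mpr hcap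
    rw [mul_assoc, inv_mul_cancel₀ hc.ne', inv_pow]
    linarith

theorem exists_pos_smul_mem_ball_iff (hp : ‖p‖ = 1) (hx : ‖x‖ = 1) (hr₀ : 0 ≤ r) (hr₁ : r ≤ 1) :
    (∃ t : ℝ, 0 < t ∧ t • x ∈ ball p r) ↔ 0 < ⟪x, p⟫ ∧ 1 - r ^ 2 < ⟪x, p⟫ ^ 2 := by
  simp only [mem_ball, dist_eq_norm, ← pow_lt_pow_iff_left₀ (norm_nonneg _) hr₀ two_ne_zero,
    norm_smul_sub_sq hp hx]
  constructor
  · rintro ⟨t, ht, hdist⟩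
    exact ⟨by nlinarith, by nlinarith [sq_nonneg (t - ⟪x, p⟫)]⟩
  · rintro ⟨hc, hcap⟩
    exact ⟨⟪x, p⟫, hc, by linarith⟩

end TangentDisc

section RadialProjection

variable {k : ℕ} {x y : EuclideanSpace ℝ (Fin k)}

theorem norm_smul_sphProj (y : EuclideanSpace ℝ (Fin k)) : ‖y‖ • sphProj y = y := by
  rcases eq_or_ne y 0 with rfl | hy
  · simp [sphProj]
  · rw [sphProj, smul_smul, mul_inv_cancel₀ (norm_ne_zero_iff.mpr hy), one_smul]

theorem norm_sphProj (hy : y ≠ 0) : ‖sphProj y‖ = 1 := by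
  rw [sphProj, norm_smul, norm_inv, norm_norm, inv_mul_cancel₀ (norm_ne_zero_iff.mpr hy)]

theorem sphProj_smul_of_pos {t : ℝ} (ht : 0 < t) (y : EuclideanSpace ℝ (Fin k)) :
    sphProj (t • y) = sphProj y := by
  rw [sphProj, sphProj, norm_smul, Real.norm_of_nonneg ht.le, smul_smul, mul_inv,
    mul_right_comm, inv_mul_cancel₀ ht.ne', one_mul]

theorem mem_sphProj_image_iff {S : Set (EuclideanSpace ℝ (Fin k))} (h0 : 0 ∉ S) :
    x ∈ sphProj '' S ↔ ‖x‖ = 1 ∧ ∃ t : ℝ, 0 < t ∧ t • x ∈ S := by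
  constructor
  · rintro ⟨y, hy, rfl⟩
    have hy0 : y ≠ 0 := fun h => h0 (h ▸ hy)
    exact ⟨norm_sphProj hy0, ‖y‖, norm_pos_iff.mpr hy0, (norm_smul_sphProj y).symm ▸ hy⟩
  · rintro ⟨hx, t, ht, hS⟩
    exact ⟨t • x, hS, by rw [sphProj_smul_of_pos ht, sphProj, hx, inv_one, one_smul]⟩

theorem sphProj_image_inter_of_smul_mem {Z A : Set (EuclideanSpace ℝ (Fin k))}
    (hZ : ∀ c : ℝ, ∀ z ∈ Z, c • z ∈ Z) : sphProj '' (Z ∩ A) = Z ∩ sphProj '' A := by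
  ext x
  constructor
  · rintro ⟨z, ⟨hz, hA⟩, rfl⟩
    exact ⟨hZ _ z hz, z, hA, rfl⟩
  · rintro ⟨hx, a, hA, rfl⟩
    exact ⟨a, ⟨norm_smul_sphProj a ▸ hZ _ _ hx, hA⟩, rfl⟩

theorem sphProj_image_tangentDisc_eq_image_ball {p : EuclideanSpace ℝ (Fin k)} (hp : ‖p‖ = 1)
    {ε : ℝ} (hε : 0 ≤ ε) : sphProj '' tangentDisc p ε = sphProj '' ball p (ε / √(1 + ε ^ 2)) := by
  have hpos : 0 < 1 + ε ^ 2 := by positivity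
  have hr₁ : ε / √(1 + ε ^ 2) ≤ 1 :=
    div_le_one_of_le₀ (Real.le_sqrt_of_sq_le (by linarith)) (Real.sqrt_nonneg _)
  have hr_sq : 1 - (ε / √(1 + ε ^ 2)) ^ 2 = (1 + ε ^ 2)⁻¹ := by
    rw [div_pow, Real.sq_sqrt hpos.le]
    field_simp
    ring
  ext x
  rw [mem_sphProj_image_iff (zero_notMem_tangentDisc hp),
    mem_sphProj_image_iff (zero_notMem_ball_of_le_norm (hp ▸ hr₁))]
  refine and_congr_right fun hx => ?_
  rw [exists_pos_smul_mem_tangentDisc_iff hp hx hε,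
    exists_pos_smul_mem_ball_iff hp hx (by positivity) hr₁, hr_sq, inv_lt_iff_one_lt_mul₀' hpos]

end RadialProjection

theorem statement17_general {n m : ℕ} (d : Fin m → ℕ)
    (f : Fin m → MvPolynomial (Fin (n + 1)) ℝ) (hf : ∀ i, (f i).IsHomogeneous (d i))
    (p : EuclideanSpace ℝ (Fin (n + 1)))
    (hp : p ∈ Metric.sphere (0 : EuclideanSpace ℝ (Fin (n + 1))) 1)
    (T : Submodule ℝ (EuclideanSpace ℝ (Fin (n + 1)))) (hT : T = (ℝ ∙ p)ᗮ)
    (ε : ℝ) (hε0 : 0 < ε) :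
    sphProj '' ({z | evalSys f z = 0} ∩ {z | ∃ v ∈ T, ‖v‖ < ε ∧ z = p + v}) =
      {x | x ∈ Metric.sphere (0 : EuclideanSpace ℝ (Fin (n + 1))) 1 ∧ evalSys f x = 0} ∩
        sphProj '' Metric.ball p (ε / Real.sqrt (1 + ε ^ 2)) := by
  subst hT
  have hp1 : ‖p‖ = 1 := by simpa using hp
  have hdisc_sphere : sphProj '' tangentDisc p ε ⊆ sphere 0 1 := by
    rintro _ ⟨y, hy, rfl⟩
    exact mem_sphere_zero_iff_norm.mpr (norm_sphProj fun h => zero_notMem_tangentDisc hp1 (h ▸ hy))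
  have hZ : ∀ c : ℝ, ∀ z ∈ {z | evalSys f z = 0}, c • z ∈ {z | evalSys f z = 0} :=
    fun c _ hz => evalSys_smul_eq_zero hf c hz
  change sphProj '' (_ ∩ tangentDisc p ε) = _
  rw [sphProj_image_inter_of_smul_mem hZ, ← sphProj_image_tangentDisc_eq_image_ball hp1 hε0.le]
  ext x
  exact ⟨fun ⟨hz, hx⟩ => ⟨⟨hdisc_sphere hx, hz⟩, hx⟩, fun ⟨⟨_, hz⟩, hx⟩ => ⟨hz, hx⟩⟩

/-- (Lemma `M1`.) For ε ∈ (0,1),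
φ(Z ∩ B_{ε,T}(p)) = M_S ∩ φ(B_{h(ε)}(p)) with h(ε) = ε/√(1+ε²). -/
theorem statement17 {n m : ℕ} (hm : m ≤ n + 1) (d : Fin m → ℕ) (hd : ∀ i, 1 ≤ d i)
    (f : Fin m → MvPolynomial (Fin (n + 1)) ℝ) (hf : ∀ i, (f i).IsHomogeneous (d i))
    (p : EuclideanSpace ℝ (Fin (n + 1)))
    (hp : p ∈ Metric.sphere (0 : EuclideanSpace ℝ (Fin (n + 1))) 1)
    (T : Submodule ℝ (EuclideanSpace ℝ (Fin (n + 1)))) (hT : T = (ℝ ∙ p)ᗮ)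
    (ε : ℝ) (hε0 : 0 < ε) (hε1 : ε < 1) :
    sphProj '' ({z | evalSys f z = 0} ∩ {z | ∃ v ∈ T, ‖v‖ < ε ∧ z = p + v}) =
      {x | x ∈ Metric.sphere (0 : EuclideanSpace ℝ (Fin (n + 1))) 1 ∧ evalSys f x = 0} ∩
        sphProj '' Metric.ball p (ε / Real.sqrt (1 + ε ^ 2)) :=
  statement17_general d f hf p hp T hT ε hε0
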